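/- Let V be a Hermitian space with complex structure J, let z ∈ V be nonzero, and let θ be uniform on [0, 2π]. Then the Vitale zonoid of X_z := π e^{θJ} z equals the closed centered disc D_z of radius ‖z‖ in the real 2-plane ℂz, and ℓ(D_z) = π‖z‖. -/

import Mathlib

open MeasureTheory

/-- Support function on a complex inner product space, via the real part of the Hermitian
inner product: `h_{K(X)}(v) = ½ E|Re⟨v, X⟩|`. -/
noncomputable def suppFnC {Ω : Type*} [MeasurableSpace Ω] (μ : Measure Ω)
    {V : Type*} [NormedAddCommGroup V] [InnerProductSpace ℂ V]
    (X : Ω → V) (v : V) : ℝ :=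
  (1 / 2) * ∫ ω, |(inner ℂ v (X ω) : ℂ).re| ∂μ

/-- The Vitale zonoid of a random vector in a complex inner product space, viewed as a
convex body of the underlying real space. -/
noncomputable def vitaleZonoidC {Ω : Type*} [MeasurableSpace Ω] (μ : Measure Ω)
    {V : Type*} [NormedAddCommGroup V] [InnerProductSpace ℂ V]
    (X : Ω → V) : Set V :=
  {x | ∀ v : V, (inner ℂ x v : ℂ).re ≤ suppFnC μ X v}

/-!
Writing `X_z = π e^{iθ} z`, one has `Re⟪v, X_z⟫ = π ‖⟪v, z⟫‖ cos (θ + arg ⟪v, z⟫)`, so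
`E|cos| = 2/π` makes the support function of the zonoid equal to `v ↦ ‖⟪v, z⟫‖`. That is the
support function of the disc `{c • z | ‖c‖ ≤ 1}`: testing a point `x` under it against its
component `w` orthogonal to `z` gives `‖w‖² ≤ 0`, so `x ∈ ℂ z`, and testing against `x` itself
gives `‖x‖ ≤ ‖z‖`. Finally `‖X_z‖ = π ‖z‖` is constant.
-/

open Real

theorem integral_abs_cos_add_two_pi (s : ℝ) : ∫ t in s..s + 2 * π, |cos t| = 4 := by
  have hper : Function.Periodic (fun t => |cos t|) π := fun t => by simp [cos_add_pi]
  have hint : ∀ a b : ℝ, IntervalIntegrable (fun t => |cos t|) volume a b :=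
    fun a b => (continuous_cos.abs).intervalIntegrable a b
  have hcos : ∫ t in -(π / 2)..π / 2, |cos t| = 2 := by
    rw [intervalIntegral.integral_congr (g := cos) fun t ht => abs_of_nonneg
      (cos_nonneg_of_mem_Icc (by rwa [Set.uIcc_of_le (by linarith [pi_pos])] at ht))]
    rw [integral_cos, sin_neg, sin_pi_div_two]
    norm_num
  have htwo := hper.intervalIntegral_add_zsmul_eq 2 s hint
  simp only [zsmul_eq_mul, Int.cast_ofNat] at htwo
  rw [htwo, hper.intervalIntegral_add_eq s (-(π / 2)), show -(π / 2) + π = π / 2 by ring, hcos]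
  norm_num

theorem integral_comp_of_map_eq_uniform {Ω : Type*} [MeasurableSpace Ω] {μ : Measure Ω}
    {θ : Ω → ℝ} (hθm : Measurable θ)
    (hθ : Measure.map θ μ = (ENNReal.ofReal (2 * π))⁻¹ • volume.restrict (Set.Icc 0 (2 * π)))
    {f : ℝ → ℝ} (hf : Measurable f) :
    ∫ ω, f (θ ω) ∂μ = (2 * π)⁻¹ * ∫ t in 0..2 * π, f t := by
  rw [← integral_map hθm.aemeasurable hf.aestronglyMeasurable, hθ, integral_smul_measure,
    ENNReal.toReal_inv, ENNReal.toReal_ofReal (by positivity), integral_Icc_eq_integral_Ioc,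
    ← intervalIntegral.integral_of_le (by positivity), smul_eq_mul]

theorem integral_abs_cos_add_of_map_eq_uniform {Ω : Type*} [MeasurableSpace Ω] {μ : Measure Ω}
    {θ : Ω → ℝ} (hθm : Measurable θ)
    (hθ : Measure.map θ μ = (ENNReal.ofReal (2 * π))⁻¹ • volume.restrict (Set.Icc 0 (2 * π)))
    (φ : ℝ) : ∫ ω, |cos (θ ω + φ)| ∂μ = 2 / π := by
  rw [integral_comp_of_map_eq_uniform hθm hθ (f := fun t => |cos (t + φ)|) (by fun_prop),
    intervalIntegral.integral_comp_add_right (fun t => |cos t|), zero_add, add_comm _ φ,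
    integral_abs_cos_add_two_pi]
  field_simp; ring

theorem Complex.re_exp_mul_I_mul (t : ℝ) (α : ℂ) :
    (Complex.exp (t * Complex.I) * α).re = ‖α‖ * Real.cos (t + Complex.arg α) := by
  conv_lhs => rw [← Complex.norm_mul_exp_arg_mul_I α, mul_left_comm, ← Complex.exp_add,
    ← add_mul, ← Complex.ofReal_add, Complex.re_ofReal_mul, Complex.exp_ofReal_mul_I_re]

theorem cos_smul_add_sin_smul_I_smul {V : Type*} [AddCommGroup V] [Module ℂ V] (r t : ℝ)
    (z : V) :
    (r * cos t) • z + (r * sin t) • (Complex.I • z)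
      = ((r : ℂ) * Complex.exp (t * Complex.I)) • z := by
  rw [Complex.exp_mul_I, ← Complex.ofReal_cos, ← Complex.ofReal_sin, mul_add, add_smul,
    ← mul_assoc, mul_smul _ Complex.I, ← Complex.ofReal_mul, ← Complex.ofReal_mul,
    Complex.coe_smul, Complex.coe_smul]

section
variable {V : Type*} [NormedAddCommGroup V] [InnerProductSpace ℂ V]

theorem re_inner_smul_le_norm_inner {c : ℂ} (hc : ‖c‖ ≤ 1) (z v : V) :
    (inner ℂ (c • z) v).re ≤ ‖inner ℂ v z‖ :=
  calc (inner ℂ (c • z) v).re ≤ ‖c‖ * ‖inner ℂ z v‖ := by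
        rw [inner_smul_left, ← Complex.norm_conj c, ← norm_mul]; exact Complex.re_le_norm _
    _ ≤ ‖inner ℂ v z‖ := by
        rw [norm_inner_symm]; exact mul_le_of_le_one_left (norm_nonneg _) hc

theorem exists_smul_eq_of_forall_re_inner_le {x z : V}
    (h : ∀ v, (inner ℂ x v).re ≤ ‖inner ℂ v z‖) : ∃ c : ℂ, ‖c‖ ≤ 1 ∧ c • z = x := by
  set c : ℂ := inner ℂ z x / ((‖z‖ ^ 2 : ℝ) : ℂ)
  have hproj : (ℂ ∙ z).starProjection x = c • z := Submodule.starProjection_singleton ℂ x (v := z)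
  set w := x - c • z
  have hzw : inner ℂ z w = 0 := Submodule.mem_orthogonal_singleton_iff_inner_right.mp
    (by simpa only [hproj] using (ℂ ∙ z).sub_starProjection_mem_orthogonal x)
  have hw : w = 0 := by
    have hxw : inner ℂ x w = inner ℂ w w := by
      rw [show x = w + c • z by simp [w], inner_add_left, inner_smul_left, hzw, mul_zero, add_zero]
    have hsq := h w
    rw [hxw, ← norm_inner_symm, hzw, norm_zero, ← RCLike.re_to_complex,
      inner_self_eq_norm_sq] at hsq
    exact norm_eq_zero.mp (pow_eq_zero_iff two_ne_zero |>.mp (le_antisymm hsq (sq_nonneg _)))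
  have hx : c • z = x := (sub_eq_zero.mp hw).symm
  refine ⟨c, ?_, hx⟩
  have hxz : ‖x‖ ≤ ‖z‖ := by
    have hsq := (h x).trans (norm_inner_le_norm x z)
    rw [← RCLike.re_to_complex, inner_self_eq_norm_sq, sq] at hsq
    rcases (norm_nonneg x).eq_or_lt with h0 | hpos
    · rw [← h0]; exact norm_nonneg z
    · exact le_of_mul_le_mul_left hsq hpos
  rw [norm_div, Complex.norm_real, Real.norm_of_nonneg (by positivity)]
  exact div_le_one_of_le₀ ((norm_inner_le_norm z x).trans (by nlinarith [norm_nonneg z]))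
    (by positivity)

theorem setOf_re_inner_le_norm_inner_eq_image_closedBall (z : V) :
    {x : V | ∀ v, (inner ℂ x v).re ≤ ‖inner ℂ v z‖}
      = (fun c : ℂ => c • z) '' Metric.closedBall 0 1 := by
  ext x
  simp only [Set.mem_ofPred_eq, Set.mem_image, Metric.mem_closedBall, dist_zero_right]
  constructor
  · exact exists_smul_eq_of_forall_re_inner_le
  · rintro ⟨c, hc, rfl⟩
    exact re_inner_smul_le_norm_inner hc z

end

theorem suppFnC_uniform_rotation {Ω : Type*} [MeasurableSpace Ω] {μ : Measure Ω}
    {θ : Ω → ℝ} (hθm : Measurable θ)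
    (hθ : Measure.map θ μ = (ENNReal.ofReal (2 * π))⁻¹ • volume.restrict (Set.Icc 0 (2 * π)))
    {V : Type*} [NormedAddCommGroup V] [InnerProductSpace ℂ V] (z v : V) :
    suppFnC μ (fun ω => ((π : ℂ) * Complex.exp (θ ω * Complex.I)) • z) v = ‖inner ℂ v z‖ := by
  have hpt : ∀ ω, |(inner ℂ v (((π : ℂ) * Complex.exp (θ ω * Complex.I)) • z)).re|
      = π * ‖inner ℂ v z‖ * |cos (θ ω + Complex.arg (inner ℂ v z))| := fun ω => by
    rw [inner_smul_right, mul_assoc, Complex.re_ofReal_mul, Complex.re_exp_mul_I_mul, abs_mul,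
      abs_mul, abs_of_pos pi_pos, abs_norm, mul_assoc]
  simp only [suppFnC, hpt, integral_const_mul, integral_abs_cos_add_of_map_eq_uniform hθm hθ]
  field_simp

theorem stmt18_general {Ω : Type*} [MeasurableSpace Ω] (μ : Measure Ω) [IsProbabilityMeasure μ]
    {V : Type*} [NormedAddCommGroup V] [InnerProductSpace ℂ V]
    (z : V)
    (θ : Ω → ℝ) (hθm : Measurable θ)
    (hθ : Measure.map θ μ
      = (ENNReal.ofReal (2 * Real.pi))⁻¹ • volume.restrict (Set.Icc 0 (2 * Real.pi))) :
    vitaleZonoidC μ (fun ω =>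
        (Real.pi * Real.cos (θ ω)) • z + (Real.pi * Real.sin (θ ω)) • (Complex.I • z))
      = (fun c : ℂ => c • z) '' Metric.closedBall (0 : ℂ) 1
    ∧ (∫ ω, ‖(Real.pi * Real.cos (θ ω)) • z
          + (Real.pi * Real.sin (θ ω)) • (Complex.I • z)‖ ∂μ) = Real.pi * ‖z‖ := by
  simp only [cos_smul_add_sin_smul_I_smul]
  refine ⟨?_, ?_⟩
  · simp only [vitaleZonoidC, suppFnC_uniform_rotation hθm hθ]
    exact setOf_re_inner_le_norm_inner_eq_image_closedBall z
  · simp [norm_smul, abs_of_pos pi_pos]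

/-- For `z ≠ 0` and `θ` uniform on `[0,2π]`, the zonoid of `X_z = π e^{θJ} z`
(`e^{θJ} = cos θ·Id + sin θ·J`, `J` = multiplication by `i`) is the closed centered disc
`D_z` of radius `‖z‖` in the complex line `ℂz`, and `ℓ(D_z) = E‖X_z‖ = π‖z‖`. -/
theorem stmt18 {Ω : Type*} [MeasurableSpace Ω] (μ : Measure Ω) [IsProbabilityMeasure μ]
    {V : Type*} [NormedAddCommGroup V] [InnerProductSpace ℂ V] [FiniteDimensional ℂ V]
    (z : V) (hz : z ≠ 0)
    (θ : Ω → ℝ) (hθm : Measurable θ)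
    (hθ : Measure.map θ μ
      = (ENNReal.ofReal (2 * Real.pi))⁻¹ • volume.restrict (Set.Icc 0 (2 * Real.pi))) :
    vitaleZonoidC μ (fun ω =>
        (Real.pi * Real.cos (θ ω)) • z + (Real.pi * Real.sin (θ ω)) • (Complex.I • z))
      = (fun c : ℂ => c • z) '' Metric.closedBall (0 : ℂ) 1
    ∧ (∫ ω, ‖(Real.pi * Real.cos (θ ω)) • z
          + (Real.pi * Real.sin (θ ω)) • (Complex.I • z)‖ ∂μ) = Real.pi * ‖z‖ :=
  stmt18_general μ z θ hθm hθ
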